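/- Let φ be the Lévy measure of the two-dimensional Lévy process g_t = (g^r_t, ρ g^r_t + g̃^λ_t), where g^r is gamma with parameters (c_r, γ_r), g̃^λ is a gamma-subordinated gamma process with Lévy density φ_λ, and ρ ≥ 0. Then ∫_{‖x‖ ≥ 1} log(‖x‖) φ(dx) = ∫_{1/(1+ρ)}^∞ log(x(1+ρ)) γ_r e^{−c_r x}/x dx + ∫_1^∞ log(y) φ_λ(y) dy < ∞. -/

import Mathlib

open MeasureTheory Set Real

/-- The Lévy density of the gamma-time-changed gamma (double gamma) process. -/
noncomputable def doubleGammaLevyDensity (cL gL cT gT : ℝ) (y : ℝ) : ℝ :=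
  gT * (Real.exp (-cL * y) / y) *
    ∫ x in Ioi (0 : ℝ), (cL * y) ^ (gL * x) / Real.Gamma (gL * x) * (Real.exp (-cT * x) / x)

/-- The Lévy measure of the two-dimensional Lévy process
`g_t = (g^r_t, ρ g^r_t + g̃^λ_t)`: it is supported on the ray `{(x, ρx) : x > 0}` with
intensity `φ_r(x) = γ_r e^{-c_r x}/x` and on the axis `{(0,y) : y > 0}` with intensity
`φ_λ`. -/
noncomputable def twoDimLevyMeasure (cr γr cL gL cT gT ρ : ℝ) : Measure (ℝ × ℝ) :=
  Measure.map (fun x => (x, ρ * x))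
      ((volume.restrict (Ioi (0:ℝ))).withDensity
        (fun x => ENNReal.ofReal (γr * Real.exp (-cr * x) / x)))
    + Measure.map (fun y => ((0:ℝ), y))
      ((volume.restrict (Ioi (0:ℝ))).withDensity
        (fun y => ENNReal.ofReal (doubleGammaLevyDensity cL gL cT gT y)))

/-! The measure `φ` lives on two half-lines through the origin, so its log-moment splits into a
one-dimensional integral along the ray `x ↦ (x, ρx)`, where `‖(x, ρx)‖ = (1 + ρ)x`, and one along
the axis `y ↦ (0, y)`. On the ray, `log t ≤ t` bounds the integrand by a multiple of `e^{-c_r x}`.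
On the axis, Tonelli swaps the `y`- and `x`-integrals in `φ_λ`; with `log y / y ≤ 1` the inner
`y`-integral is at most a Gamma integral, `Γ(γ_λ x + 1) / c_λ = γ_λ x Γ(γ_λ x) / c_λ`, which cancels
the `1 / (x Γ(γ_λ x))` of the kernel and leaves the integrable `e^{-c_τ x}`. -/

open scoped ENNReal

@[fun_prop]
theorem Real.measurable_Gamma : Measurable Gamma := by
  refine (ContinuousOn.stronglyMeasurable_of_countable_compl (s := (range fun n : ℕ => -(n : ℝ))ᶜ)
    (fun s hs => ?_) (by simpa using countable_range _)).measurable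
  exact (differentiableAt_Gamma fun m h => hs ⟨m, h.symm⟩).continuousAt.continuousWithinAt

lemma integrableOn_exp_neg_mul_mul_rpow {c s : ℝ} (hc : 0 < c) (hs : -1 < s) :
    IntegrableOn (fun y => exp (-(c * y)) * (c * y) ^ s) (Ioi 0) := by
  have := GammaIntegral_convergent (s := s + 1) (by linarith)
  rw [← mul_zero c, ← integrableOn_Ioi_comp_mul_left_iff _ _ hc] at this
  simpa using this

lemma integral_exp_neg_mul_mul_rpow {c s : ℝ} (hc : 0 < c) (hs : -1 < s) :
    ∫ y in Ioi 0, exp (-(c * y)) * (c * y) ^ s = Gamma (s + 1) / c := by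
  rw [integral_comp_mul_left_Ioi (fun u => exp (-u) * u ^ s) 0 hc, mul_zero,
    Gamma_eq_integral (by linarith), add_sub_cancel_right, smul_eq_mul, inv_mul_eq_div]

lemma setLIntegral_enorm_log_div_mul_exp_neg_mul_mul_rpow_le {c s : ℝ} (hc : 0 < c)
    (hs : -1 < s) :
    ∫⁻ y in Ioi 1, ‖log y / y * (exp (-(c * y)) * (c * y) ^ s)‖ₑ
      ≤ ENNReal.ofReal (Gamma (s + 1) / c) := by
  have log_div_le_one : ∀ y ∈ Ioi (1 : ℝ), ‖log y / y‖ₑ ≤ 1 := fun y hy => by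
    have hy0 : 0 < y := zero_lt_one.trans hy
    rw [enorm_of_nonneg (div_nonneg (log_nonneg hy.le) hy0.le), ENNReal.ofReal_le_one]
    exact div_le_one_of_le₀ (log_le_self hy0.le) hy0.le
  calc ∫⁻ y in Ioi 1, ‖log y / y * (exp (-(c * y)) * (c * y) ^ s)‖ₑ
      ≤ ∫⁻ y in Ioi 1, ‖exp (-(c * y)) * (c * y) ^ s‖ₑ :=
        setLIntegral_mono' measurableSet_Ioi fun y hy => by
          rw [enorm_mul]; exact mul_le_of_le_one_left' (log_div_le_one y hy)
    _ ≤ ∫⁻ y in Ioi 0, ‖exp (-(c * y)) * (c * y) ^ s‖ₑ :=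
        lintegral_mono_set (Ioi_subset_Ioi zero_le_one)
    _ = ENNReal.ofReal (∫ y in Ioi 0, ‖exp (-(c * y)) * (c * y) ^ s‖) :=
        (ofReal_integral_norm_eq_lintegral_enorm (integrableOn_exp_neg_mul_mul_rpow hc hs)).symm
    _ = ENNReal.ofReal (Gamma (s + 1) / c) := by
        rw [← integral_exp_neg_mul_mul_rpow hc hs]
        refine congrArg _ (setIntegral_congr_fun measurableSet_Ioi fun y hy => ?_)
        exact norm_of_nonneg (by have : 0 < y := hy; positivity)

theorem integrableOn_log_mul_mul_exp_neg_mul_div {c k : ℝ} (γ : ℝ) (hc : 0 < c) (hk : 0 < k) :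
    IntegrableOn (fun x => log (x * k) * (γ * exp (-c * x) / x)) (Ioi (1 / k)) := by
  refine Integrable.mono' ((exp_neg_integrableOn_Ioi (1 / k) hc).const_mul (k * ‖γ‖))
    (by fun_prop) ((ae_restrict_iff' measurableSet_Ioi).2 (ae_of_all _ fun x hx => ?_))
  have hx0 : 0 < x := (one_div_pos.2 hk).trans hx
  have hxk : 1 ≤ x * k := ((div_lt_iff₀ hk).1 hx).le
  rw [norm_mul, norm_div, norm_mul, norm_of_nonneg (log_nonneg hxk),
    norm_of_nonneg (exp_pos _).le, norm_of_nonneg hx0.le]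
  calc log (x * k) * (‖γ‖ * exp (-c * x) / x)
      ≤ x * k * (‖γ‖ * exp (-c * x) / x) := by gcongr; exact log_le_self (by positivity)
    _ = k * ‖γ‖ * exp (-c * x) := by field_simp

noncomputable def doubleGammaKernel (cL gL cT y x : ℝ) : ℝ :=
  (cL * y) ^ (gL * x) / Gamma (gL * x) * (exp (-cT * x) / x)

lemma measurable_doubleGammaKernel (cL gL cT : ℝ) :
    Measurable (Function.uncurry (doubleGammaKernel cL gL cT)) := by
  unfold doubleGammaKernel Function.uncurry
  fun_prop

lemma doubleGammaLevyDensity_eq (cL gL cT gT y : ℝ) :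
    doubleGammaLevyDensity cL gL cT gT y
      = gT * (exp (-cL * y) / y) * ∫ x in Ioi 0, doubleGammaKernel cL gL cT y x := rfl

lemma measurable_doubleGammaLevyDensity (cL gL cT gT : ℝ) :
    Measurable (doubleGammaLevyDensity cL gL cT gT) := by
  have hint := ((measurable_doubleGammaKernel cL gL cT).stronglyMeasurable.integral_prod_right
    (ν := volume.restrict (Ioi 0))).measurable
  exact (by fun_prop : Measurable fun y => gT * (exp (-cL * y) / y)).mul hint

lemma doubleGammaLevyDensity_nonneg {cL gL cT gT y : ℝ} (hcL : 0 ≤ cL) (hgL : 0 ≤ gL)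
    (hgT : 0 ≤ gT) (hy : 0 ≤ y) : 0 ≤ doubleGammaLevyDensity cL gL cT gT y := by
  refine mul_nonneg (by positivity) (setIntegral_nonneg measurableSet_Ioi fun x hx => ?_)
  have hx : 0 < x := hx
  have := Gamma_nonneg_of_nonneg (mul_nonneg hgL hx.le)
  positivity

lemma setLIntegral_enorm_log_mul_doubleGammaKernel_le {cL gL : ℝ} (cT gT : ℝ) (hcL : 0 < cL)
    (hgL : 0 < gL) {x : ℝ} (hx : 0 < x) :
    ∫⁻ y in Ioi 1, ‖log y * (gT * (exp (-cL * y) / y)) * doubleGammaKernel cL gL cT y x‖ₑ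
      ≤ ENNReal.ofReal (|gT| * gL / cL * exp (-cT * x)) := by
  have hs : 0 < gL * x := by positivity
  have split : ∀ y, ‖log y * (gT * (exp (-cL * y) / y)) * doubleGammaKernel cL gL cT y x‖ₑ
      = ‖gT * (exp (-cT * x) / x) / Gamma (gL * x)‖ₑ *
        ‖log y / y * (exp (-(cL * y)) * (cL * y) ^ (gL * x))‖ₑ := fun y => by
    rw [← enorm_mul]; unfold doubleGammaKernel; congr 1; ring_nf
  have hC : |gT * (exp (-cT * x) / x) / Gamma (gL * x)| * (Gamma (gL * x + 1) / cL)
      = |gT| * gL / cL * exp (-cT * x) := by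
    rw [abs_div, abs_mul, abs_div, abs_of_pos (exp_pos _), abs_of_pos hx,
      abs_of_pos (Gamma_pos_of_pos hs), Gamma_add_one hs.ne']
    field_simp
  rw [lintegral_congr split, lintegral_const_mul' _ _ enorm_ne_top, enorm_eq_ofReal_abs, ← hC,
    ENNReal.ofReal_mul (abs_nonneg _)]
  exact mul_le_mul_right
    (setLIntegral_enorm_log_div_mul_exp_neg_mul_mul_rpow_le hcL (by linarith)) _

theorem integrableOn_log_mul_doubleGammaLevyDensity {cL gL cT : ℝ} (gT : ℝ) (hcL : 0 < cL)
    (hgL : 0 < gL) (hcT : 0 < cT) :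
    IntegrableOn (fun y => log y * doubleGammaLevyDensity cL gL cT gT y) (Ioi 1) := by
  refine ⟨(measurable_log.mul (measurable_doubleGammaLevyDensity ..)).aestronglyMeasurable, ?_⟩
  have hK : Measurable fun p : ℝ × ℝ =>
      ‖log p.1 * (gT * (exp (-cL * p.1) / p.1)) * doubleGammaKernel cL gL cT p.1 p.2‖ₑ := by
    have := measurable_doubleGammaKernel cL gL cT
    fun_prop
  calc ∫⁻ y in Ioi 1, ‖log y * doubleGammaLevyDensity cL gL cT gT y‖ₑ
      ≤ ∫⁻ y in Ioi 1, ∫⁻ x in Ioi 0,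
          ‖log y * (gT * (exp (-cL * y) / y)) * doubleGammaKernel cL gL cT y x‖ₑ :=
        lintegral_mono fun y => by
          rw [doubleGammaLevyDensity_eq, ← mul_assoc, ← integral_const_mul]
          exact enorm_integral_le_lintegral_enorm _
    _ = ∫⁻ x in Ioi 0, ∫⁻ y in Ioi 1,
          ‖log y * (gT * (exp (-cL * y) / y)) * doubleGammaKernel cL gL cT y x‖ₑ :=
        lintegral_lintegral_swap hK.aemeasurable
    _ ≤ ∫⁻ x in Ioi 0, ENNReal.ofReal (|gT| * gL / cL * exp (-cT * x)) :=
        setLIntegral_mono' measurableSet_Ioi fun x hx =>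
          setLIntegral_enorm_log_mul_doubleGammaKernel_le cT gT hcL hgL hx
    _ < ⊤ := ((exp_neg_integrableOn_Ioi 0 hcT).const_mul _).lintegral_lt_top

lemma setLIntegral_map_withDensity {α β : Type*} [MeasurableSpace α] [MeasurableSpace β]
    {μ : Measure α} {g : α → β} {w : α → ℝ≥0∞} {F : β → ℝ≥0∞} {S : Set β}
    (hg : Measurable g) (hw : Measurable w) (hF : Measurable F) (hS : MeasurableSet S) :
    ∫⁻ p in S, F p ∂(μ.withDensity w).map g = ∫⁻ x in g ⁻¹' S, w x * F (g x) ∂μ := by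
  rw [Measure.restrict_map hg hS, lintegral_map hF hg, restrict_withDensity (hg hS)]
  exact lintegral_withDensity_eq_lintegral_mul _ hw (hF.comp hg)

lemma setLIntegral_log_norm_map_ray {a b : ℝ} (ha : 0 ≤ a) (hb : 0 ≤ b) (hab : 0 < a + b)
    {w : ℝ → ℝ} (hw : Measurable w) :
    ∫⁻ p in {p : ℝ × ℝ | 1 ≤ |p.1| + |p.2|}, ENNReal.ofReal (log (|p.1| + |p.2|))
        ∂((volume.restrict (Ioi 0)).withDensity fun x => ENNReal.ofReal (w x)).map
          (fun x => (a * x, b * x))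
      = ∫⁻ x in Ioi (1 / (a + b)), ENNReal.ofReal (log (x * (a + b)) * w x) := by
  have norm_ray : ∀ x, 0 < x → |a * x| + |b * x| = x * (a + b) := fun x hx => by
    rw [abs_of_nonneg (by positivity), abs_of_nonneg (by positivity)]; ring
  have hS : MeasurableSet {p : ℝ × ℝ | 1 ≤ |p.1| + |p.2|} :=
    measurableSet_le measurable_const (by fun_prop)
  have hpre : (fun x => (a * x, b * x)) ⁻¹' {p : ℝ × ℝ | 1 ≤ |p.1| + |p.2|} ∩ Ioi 0
      = Ici (1 / (a + b)) := by
    ext x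
    simp only [mem_inter_iff, mem_preimage, mem_ofPred_eq, mem_Ioi, mem_Ici, div_le_iff₀ hab]
    constructor
    · rintro ⟨h1, hx⟩
      rwa [norm_ray x hx] at h1
    · intro h
      have hx : 0 < x := pos_of_mul_pos_left (one_pos.trans_le h) hab.le
      exact ⟨(norm_ray x hx).symm ▸ h, hx⟩
  have hray : Measurable fun x : ℝ => (a * x, b * x) := by fun_prop
  rw [setLIntegral_map_withDensity hray hw.ennreal_ofReal (by fun_prop) hS,
    Measure.restrict_restrict (hray hS), hpre,
    Measure.restrict_congr_set Ioi_ae_eq_Ici.symm]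
  refine setLIntegral_congr_fun measurableSet_Ioi fun x hx => ?_
  have hx1 : 1 < x * (a + b) := (div_lt_iff₀ hab).1 hx
  rw [norm_ray x ((one_div_pos.2 hab).trans hx), ← ENNReal.ofReal_mul' ?_, mul_comm]
  exact log_nonneg hx1.le

lemma setLIntegral_log_norm_twoDimLevyMeasure (cr γr cL gL cT gT : ℝ) {ρ : ℝ} (hρ : 0 ≤ ρ) :
    ∫⁻ p in {p : ℝ × ℝ | 1 ≤ |p.1| + |p.2|}, ENNReal.ofReal (log (|p.1| + |p.2|))
        ∂(twoDimLevyMeasure cr γr cL gL cT gT ρ)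
      = (∫⁻ x in Ioi (1 / (1 + ρ)), ENNReal.ofReal (log (x * (1 + ρ)) * (γr * exp (-cr * x) / x)))
        + ∫⁻ y in Ioi 1, ENNReal.ofReal (log y * doubleGammaLevyDensity cL gL cT gT y) := by
  have ray := setLIntegral_log_norm_map_ray zero_le_one hρ (by linarith)
    (w := fun x => γr * exp (-cr * x) / x) (by fun_prop)
  have axis := setLIntegral_log_norm_map_ray le_rfl zero_le_one (by norm_num)
    (measurable_doubleGammaLevyDensity cL gL cT gT)
  simp only [one_mul, zero_mul, zero_add, div_one, mul_one] at ray axis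
  rw [twoDimLevyMeasure, Measure.restrict_add, lintegral_add_measure, ray, axis]

/-- Log-moment of the Lévy measure of `(g^r, ρ g^r + g̃^λ)` (with the `ℓ¹` norm
`‖(x,y)‖ = |x| + |y|`):
`∫_{‖x‖≥1} log ‖x‖ φ(dx) = ∫_{1/(1+ρ)}^∞ log(x(1+ρ)) γ_r e^{-c_r x}/x dx
  + ∫_1^∞ log y φ_λ(y) dy < ∞`. -/
theorem stmt_12 (cr γr cL gL cT gT ρ : ℝ)
    (hcr : 0 < cr) (hγr : 0 < γr) (hcL : 0 < cL) (hgL : 0 < gL)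
    (hcT : 0 < cT) (hgT : 0 < gT) (hρ : 0 ≤ ρ) :
    IntegrableOn (fun x => Real.log (x * (1 + ρ)) * (γr * Real.exp (-cr * x) / x))
        (Ioi (1 / (1 + ρ)))
    ∧ IntegrableOn (fun y => Real.log y * doubleGammaLevyDensity cL gL cT gT y) (Ioi 1)
    ∧ (∫⁻ p in {p : ℝ × ℝ | 1 ≤ |p.1| + |p.2|},
          ENNReal.ofReal (Real.log (|p.1| + |p.2|))
            ∂(twoDimLevyMeasure cr γr cL gL cT gT ρ))
        = ENNReal.ofReal
            ((∫ x in Ioi (1 / (1 + ρ)), Real.log (x * (1 + ρ)) * (γr * Real.exp (-cr * x) / x))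
              + ∫ y in Ioi (1:ℝ), Real.log y * doubleGammaLevyDensity cL gL cT gT y)
    ∧ (∫⁻ p in {p : ℝ × ℝ | 1 ≤ |p.1| + |p.2|},
          ENNReal.ofReal (Real.log (|p.1| + |p.2|))
            ∂(twoDimLevyMeasure cr γr cL gL cT gT ρ)) < ⊤ := by
  have hρ1 : 0 < 1 + ρ := by linarith
  have ray := integrableOn_log_mul_mul_exp_neg_mul_div γr hcr hρ1
  have axis := integrableOn_log_mul_doubleGammaLevyDensity gT hcL hgL hcT
  have ray_nonneg : 0 ≤ᵐ[volume.restrict (Ioi (1 / (1 + ρ)))]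
      fun x => log (x * (1 + ρ)) * (γr * exp (-cr * x) / x) := by
    filter_upwards [ae_restrict_mem measurableSet_Ioi] with x hx
    have hx0 : 0 < x := (one_div_pos.2 hρ1).trans hx
    exact mul_nonneg (log_nonneg ((div_lt_iff₀ hρ1).1 hx).le) (by positivity)
  have axis_nonneg : 0 ≤ᵐ[volume.restrict (Ioi 1)]
      fun y => log y * doubleGammaLevyDensity cL gL cT gT y := by
    filter_upwards [ae_restrict_mem measurableSet_Ioi] with y (hy : 1 < y)
    exact mul_nonneg (log_nonneg hy.le)
      (doubleGammaLevyDensity_nonneg hcL.le hgL.le hgT.le (zero_le_one.trans hy.le))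
  have key : ∫⁻ p in {p : ℝ × ℝ | 1 ≤ |p.1| + |p.2|}, ENNReal.ofReal (log (|p.1| + |p.2|))
        ∂(twoDimLevyMeasure cr γr cL gL cT gT ρ)
      = ENNReal.ofReal ((∫ x in Ioi (1 / (1 + ρ)), log (x * (1 + ρ)) * (γr * exp (-cr * x) / x))
          + ∫ y in Ioi 1, log y * doubleGammaLevyDensity cL gL cT gT y) := by
    rw [setLIntegral_log_norm_twoDimLevyMeasure cr γr cL gL cT gT hρ,
      ENNReal.ofReal_add (integral_nonneg_of_ae ray_nonneg) (integral_nonneg_of_ae axis_nonneg),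
      ofReal_integral_eq_lintegral_ofReal ray ray_nonneg,
      ofReal_integral_eq_lintegral_ofReal axis axis_nonneg]
  exact ⟨ray, axis, key, key ▸ ENNReal.ofReal_lt_top⟩
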